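/- Let F be a field of characteristic 2, I an infinite index set with distinct distinguished elements i₀, i₁, V an F-vector space with basis (e_i)_{i∈I}, η_i ∈ V* the coordinate functionals, V' = span{η_i : i ∈ I}, V̄' = V ⊕ V', q(a,α) = α(a), u_i = (e_i, η_i) and U₀₁ = span{u_i + u_j : i, j ∈ I \ {i₀, i₁}}. Then for every subspace W of V̄' that is maximal among the totally q-singular subspaces of V̄' and contains U₀₁, there is no totally q-singular subspace X of V̄' with W ∩ X = 0 and W + X = V̄'. (That is, none of the generators of the quadric S_{q'} containing [U₀₁] admits a complement in S_{q'}.) -/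

import Mathlib

/-- `V̄' = V ⊕ V'` inside `V ⊕ V*`, where `V'` is the span of the coordinate
functionals of the basis `b`. -/
def VbarSub {F I V : Type*} [Field F] [AddCommGroup V] [Module F V]
    (b : Module.Basis I F V) : Submodule F (V × Module.Dual F V) :=
  (⊤ : Submodule F V).prod (Submodule.span F (Set.range b.coord))

/-- `U₀₁ = span { u_i + u_j : i, j ∈ I \ {i₀, i₁} }`, where `u_i = (e_i, η_i)`. -/
def U01 {F I V : Type*} [Field F] [AddCommGroup V] [Module F V]
    (b : Module.Basis I F V) (i₀ i₁ : I) : Submodule F (V × Module.Dual F V) :=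
  Submodule.span F {w : V × Module.Dual F V |
    ∃ i j : I, i ≠ i₀ ∧ i ≠ i₁ ∧ j ≠ i₀ ∧ j ≠ i₁ ∧
      w = ((b i, b.coord i) : V × Module.Dual F V) + (b j, b.coord j)}

/-- A generator of the quadric `S_{q'}`: a subspace of `V̄'` maximal among the
totally `q`-singular subspaces of `V̄'`, where `q(a,α) = α(a)`. -/
def QGenIn {F I V : Type*} [Field F] [AddCommGroup V] [Module F V]
    (b : Module.Basis I F V) (W : Submodule F (V × Module.Dual F V)) : Prop :=
  W ≤ VbarSub b ∧ (∀ w ∈ W, (w.2 w.1 : F) = 0) ∧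
    ∀ W' : Submodule F (V × Module.Dual F V),
      W' ≤ VbarSub b → (∀ w ∈ W', (w.2 w.1 : F) = 0) → W ≤ W' → W' = W

/-! Write `u_k = w + x` with `w ∈ W`, `x ∈ X` for some `k ∉ {i₀, i₁}`. As `x ∈ V̄'` has finite
support, some `u_i` with `i ∉ {i₀, i₁}` is orthogonal to `x` for the polar form of `q`; then
`u_i + x = (u_i + u_k) - w` lies in the totally singular `W`, yet `q(u_i + x) = q(u_i) = 1`. -/

section

variable {F I V : Type*} [Field F] [AddCommGroup V] [Module F V] (b : Module.Basis I F V)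

theorem Module.Basis.span_range_coord [DecidableEq I] :
    Submodule.span F (Set.range b.coord) = LinearMap.range b.toDual := by
  have : b.coord = b.toDual ∘ b := funext fun i => (b.coe_toDual_self i).symm
  rw [this, Set.range_comp, Submodule.span_image, b.span_eq, Submodule.map_top]

theorem Module.Basis.finite_setOf_apply_ne_zero_of_mem_span_coord {α : Module.Dual F V}
    (hα : α ∈ Submodule.span F (Set.range b.coord)) : {i | α (b i) ≠ 0}.Finite := by
  classical
  obtain ⟨m, rfl⟩ := b.span_range_coord ▸ hα
  simp only [b.toDual_apply_left]
  exact (b.repr m).hasFiniteSupport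

theorem finite_setOf_apply_ne_zero_or_repr_ne_zero_of_mem_VbarSub {x : V × Module.Dual F V}
    (hx : x ∈ VbarSub b) : {i | x.2 (b i) ≠ 0 ∨ b.repr x.1 i ≠ 0}.Finite :=
  (b.finite_setOf_apply_ne_zero_of_mem_span_coord hx.2).union (b.repr x.1).hasFiniteSupport

theorem apply_add_basis_pair_eq_one {x : V × Module.Dual F V} (hx : x.2 x.1 = 0) {i : I}
    (hxi : x.2 (b i) = 0) (hix : b.repr x.1 i = 0) :
    ((b i, b.coord i) + x).2 ((b i, b.coord i) + x).1 = 1 := by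
  simp [hx, hxi, hix]

end

theorem stmt_19_general {F : Type*} [Field F]
    {I : Type*} [Infinite I]
    {V : Type*} [AddCommGroup V] [Module F V]
    (b : Module.Basis I F V) (i₀ i₁ : I)
    (W : Submodule F (V × Module.Dual F V))
    (hW : QGenIn b W) (hU : U01 b i₀ i₁ ≤ W) :
    ¬ ∃ X : Submodule F (V × Module.Dual F V),
        X ≤ VbarSub b ∧ (∀ w ∈ X, (w.2 w.1 : F) = 0) ∧
        W ⊓ X = ⊥ ∧ W ⊔ X = VbarSub b := by
  rintro ⟨X, hXle, hXsing, -, hSup⟩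
  let u : I → V × Module.Dual F V := fun i => (b i, b.coord i)
  obtain ⟨k, hk⟩ := ({i₀, i₁} : Set I).toFinite.exists_notMem
  have hukW : u k ∈ W ⊔ X := hSup ▸ ⟨trivial, Submodule.subset_span ⟨k, rfl⟩⟩
  obtain ⟨w, hw, x, hx, hwx⟩ := Submodule.mem_sup.mp hukW
  obtain ⟨i, hi⟩ := (({i₀, i₁} : Set I).toFinite.union
    (finite_setOf_apply_ne_zero_or_repr_ne_zero_of_mem_VbarSub b (hXle hx))).exists_notMem
  simp only [Set.mem_union, Set.mem_insert_iff, Set.mem_singleton_iff, Set.mem_ofPred_eq, not_or,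
    not_not] at hk hi
  obtain ⟨hk₀, hk₁⟩ := hk
  obtain ⟨⟨hi₀, hi₁⟩, hxi, hix⟩ := hi
  have huiuk : u i + u k ∈ W := hU (Submodule.subset_span ⟨i, k, hi₀, hi₁, hk₀, hk₁, rfl⟩)
  have huix : u i + x ∈ W := by
    simpa only [← hwx, add_left_comm (u i), add_sub_cancel_left] using W.sub_mem huiuk hw
  have hq := hW.2.1 _ huix
  rw [apply_add_basis_pair_eq_one b (hXsing x hx) hxi hix] at hq
  exact one_ne_zero hq

/-- No generator of the quadric `S_{q'}` containing `U₀₁` admits a complement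
in `S_{q'}`. -/
theorem stmt_19 {F : Type*} [Field F] [CharP F 2]
    {I : Type*} [Infinite I]
    {V : Type*} [AddCommGroup V] [Module F V]
    (b : Module.Basis I F V) (i₀ i₁ : I) (h01 : i₀ ≠ i₁)
    (W : Submodule F (V × Module.Dual F V))
    (hW : QGenIn b W) (hU : U01 b i₀ i₁ ≤ W) :
    ¬ ∃ X : Submodule F (V × Module.Dual F V),
        X ≤ VbarSub b ∧ (∀ w ∈ X, (w.2 w.1 : F) = 0) ∧
        W ⊓ X = ⊥ ∧ W ⊔ X = VbarSub b :=
  stmt_19_general b i₀ i₁ W hW hU
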